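/- Let ρ > σ(A)·‖d‖_2 where σ(A) is the largest singular value of A ∈ R^{M×N}, d ∈ R^M. Let (x_ρ, u_ρ) be a global minimizer of G_ρ(x,u) = (1/2)‖Ax-d‖² + I(u) + ι_{x≥0}(x) + ρ(‖x‖_1 - ⟨x,u⟩), where I(u) = 0 if ‖u‖_1 ≤ k and u ∈ [-1,1]^N, +∞ otherwise. Then ‖x_ρ‖_1 = ⟨x_ρ, u_ρ⟩. -/

import Mathlib

/-!
Since `x_ρ ≥ 0`, the linear form `u ↦ ⟨x_ρ, u⟩` on the constraint set of `u` is maximised by the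
indicator `u_T` of a set `T` of at most `k` largest entries of `x_ρ`; with minimality in `u` this
gives `⟨x_ρ, u_ρ⟩ = ∑_{i ∈ T} x_ρ i`, so `(x_ρ, u_T)` is a minimiser as well. For `u = u_T` the
problem in `x` is a nonnegative LASSO with weight `ρ` on the coordinates off `T`. Comparing with
`x = 0` bounds the residual by `‖d‖`, and the first-order condition in the direction of the part
`z` of `x_ρ` off `T` gives `ρ ‖z‖₁ ≤ ‖A z‖ ‖d‖ ≤ σ(A) ‖d‖ ‖z‖₁`. Hence `z = 0`, i.e.
`‖x_ρ‖₁ = ∑_{i ∈ T} x_ρ i = ⟨x_ρ, u_ρ⟩`.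
-/

noncomputable def l2norm {m : Type*} [Fintype m] (v : m → ℝ) : ℝ :=
  Real.sqrt (∑ i, (v i) ^ 2)

noncomputable def specNorm {m n : Type*} [Fintype m] [Fintype n] [DecidableEq n]
    (A : Matrix m n ℝ) : ℝ :=
  ‖LinearMap.toContinuousLinearMap (Matrix.toEuclideanLin A)‖

open Classical in
/-- The Lagrangian cost function `G_ρ` with the constrained form of `I`. -/
noncomputable def GrhoC {M N : ℕ} (A : Matrix (Fin M) (Fin N) ℝ) (d : Fin M → ℝ)
    (ρ : ℝ) (k : ℕ) (x u : Fin N → ℝ) : EReal :=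
  (((1 : ℝ) / 2) * (∑ i, ((A.mulVec x - d) i) ^ 2)
      + ρ * ((∑ i, |x i|) - ∑ i, x i * u i) : ℝ)
  + (if (∑ i, |u i|) ≤ (k : ℝ) ∧ ∀ i, -1 ≤ u i ∧ u i ≤ 1 then (0 : EReal) else ⊤)
  + (if ∀ i, 0 ≤ x i then (0 : EReal) else ⊤)

open Finset Filter Topology

section TopSet

variable {ι α : Type*} [Fintype ι] [LinearOrder α]

def IsTopSet (x : ι → α) (T : Finset ι) : Prop :=
  ∀ i ∈ T, ∀ l ∉ T, x l ≤ x i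

theorem exists_isTopSet_card_eq (x : ι → α) {j : ℕ} (hj : j ≤ Fintype.card ι) :
    ∃ T, IsTopSet x T ∧ #T = j := by
  classical
  induction j with
  | zero => exact ⟨∅, by simp [IsTopSet], rfl⟩
  | succ j ih =>
    obtain ⟨T, hT, rfl⟩ := ih (by omega)
    have hne : Tᶜ.Nonempty := by rw [← card_pos, card_compl]; omega
    obtain ⟨l₀, hl₀, hmax⟩ := Tᶜ.exists_max_image x hne
    refine ⟨insert l₀ T, fun i hi l hl => ?_, card_insert_of_notMem (mem_compl.mp hl₀)⟩
    rw [mem_insert, not_or] at hl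
    rcases mem_insert.mp hi with rfl | hi
    · exact hmax l (mem_compl.mpr hl.2)
    · exact hT i hi l hl.2

theorem sum_mul_le_sum_of_isTopSet {x u : ι → ℝ} {T : Finset ι} (hT : IsTopSet x T)
    (hx : ∀ i, 0 ≤ x i) (hu : ∀ i, |u i| ≤ 1) (huT : ∑ i, |u i| ≤ #T) :
    ∑ i, x i * u i ≤ ∑ i ∈ T, x i := by
  classical
  rcases T.eq_empty_or_nonempty with rfl | hne
  · have hu0 : ∀ i, |u i| = 0 := fun i =>
      (sum_eq_zero_iff_of_nonneg fun i _ => abs_nonneg (u i)).mp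
        (le_antisymm (by simpa using huT) (sum_nonneg fun i _ => abs_nonneg _)) i (mem_univ i)
    simp [abs_eq_zero.mp (hu0 _)]
  obtain ⟨i₀, hi₀, hmin⟩ := T.exists_min_image x hne
  -- `m = x i₀` separates the values on `T` from those off `T`
  set m := x i₀
  have hterm : ∀ i, x i * u i ≤ (if i ∈ T then x i - m else 0) + m * |u i| := by
    intro i
    have hxu : x i * u i ≤ x i * |u i| := mul_le_mul_of_nonneg_left (le_abs_self _) (hx i)
    split_ifs with hi
    · nlinarith [hmin i hi, hu i, abs_nonneg (u i)]
    · nlinarith [hT i₀ hi₀ i hi, abs_nonneg (u i)]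
  calc ∑ i, x i * u i ≤ ∑ i, ((if i ∈ T then x i - m else 0) + m * |u i|) :=
        sum_le_sum fun i _ => hterm i
    _ = ∑ i ∈ T, x i - #T * m + m * ∑ i, |u i| := by
        simp [sum_add_distrib, sum_ite_mem, sum_sub_distrib, mul_sum]
    _ ≤ ∑ i ∈ T, x i := by nlinarith [hx i₀]

end TopSet

theorem nonpos_of_forall_mul_le_sq_mul {a b : ℝ}
    (h : ∀ t, 0 < t → t ≤ 1 → t * a ≤ t ^ 2 * b) : a ≤ 0 := by
  have hle : ∀ t, 0 < t → t ≤ 1 → a ≤ t * b := fun t ht0 ht1 =>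
    le_of_mul_le_mul_left (by nlinarith [h t ht0 ht1]) ht0
  have hlim : Tendsto (fun t => t * b) (𝓝[>] 0) (𝓝 0) := by
    simpa using ((continuous_mul_const b).tendsto 0).mono_left nhdsWithin_le_nhds
  refine ge_of_tendsto hlim ?_
  filter_upwards [Ioc_mem_nhdsGT one_pos] with t ht using hle t ht.1 ht.2

section Lasso

variable {ι F : Type*} [NormedAddCommGroup F] [InnerProductSpace ℝ F]
  {L : EuclideanSpace ℝ ι →L[ℝ] F} {d : F} {ρ : ℝ} {S : Finset ι} {x : EuclideanSpace ℝ ι}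

/-- On the nonnegative orthant `∑ i ∈ S, y i = ‖y_S‖₁`, so this is a LASSO cost penalising `y_S`. -/
noncomputable def lassoCost (L : EuclideanSpace ℝ ι →L[ℝ] F) (d : F) (ρ : ℝ) (S : Finset ι)
    (y : EuclideanSpace ℝ ι) : ℝ :=
  1 / 2 * ‖L y - d‖ ^ 2 + ρ * ∑ i ∈ S, y i

theorem norm_sub_le_of_isMinOn_lassoCost (hρ : 0 ≤ ρ) (hx : ∀ i, 0 ≤ x i)
    (hmin : IsMinOn (lassoCost L d ρ S) {y | ∀ i, 0 ≤ y i} x) : ‖L x - d‖ ≤ ‖d‖ := by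
  have h0 := hmin (show (0 : EuclideanSpace ℝ ι) ∈ {y | ∀ i, 0 ≤ y i} from fun _ => le_rfl)
  simp only [Set.mem_ofPred_eq, lassoCost, map_zero, zero_sub, norm_neg, PiLp.zero_apply,
    sum_const_zero, mul_zero, add_zero] at h0
  have hpen : 0 ≤ ρ * ∑ i ∈ S, x i := mul_nonneg hρ (sum_nonneg fun i _ => hx i)
  exact (sq_le_sq₀ (norm_nonneg _) (norm_nonneg _)).mp (by linarith)

theorem add_inner_nonpos_of_isMinOn_lassoCost {z : EuclideanSpace ℝ ι} (hz : ∀ i, 0 ≤ z i)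
    (hzx : ∀ i, z i ≤ x i)
    (hmin : IsMinOn (lassoCost L d ρ S) {y | ∀ i, 0 ≤ y i} x) :
    ρ * ∑ i ∈ S, z i + inner ℝ (L x - d) (L z) ≤ 0 := by
  refine nonpos_of_forall_mul_le_sq_mul (b := ‖L z‖ ^ 2 / 2) fun t ht0 ht1 => ?_
  have hmem : x - t • z ∈ {y | ∀ i, 0 ≤ y i} := fun i => by
    simp only [PiLp.sub_apply, PiLp.smul_apply, smul_eq_mul, sub_nonneg]
    nlinarith [hz i, hzx i]
  have h := hmin hmem
  simp only [Set.mem_ofPred_eq, lassoCost, map_sub, map_smul, PiLp.sub_apply, PiLp.smul_apply,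
    smul_eq_mul, sum_sub_distrib, ← mul_sum] at h
  rw [sub_right_comm, norm_sub_sq_real (L x - d), inner_smul_right, norm_smul, Real.norm_eq_abs,
    abs_of_pos ht0] at h
  nlinarith [h]

theorem EuclideanSpace.norm_le_sum_of_nonneg [Fintype ι] {z : EuclideanSpace ℝ ι}
    (hz : ∀ i, 0 ≤ z i) : ‖z‖ ≤ ∑ i, z i := by
  rw [← sq_le_sq₀ (norm_nonneg _) (sum_nonneg fun i _ => hz i), EuclideanSpace.real_norm_sq_eq]
  exact sum_sq_le_sq_sum_of_nonneg fun i _ => hz i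

theorem eq_zero_of_isMinOn_lassoCost [Fintype ι] (hρ : ‖L‖ * ‖d‖ < ρ) (hx : ∀ i, 0 ≤ x i)
    (hmin : IsMinOn (lassoCost L d ρ S) {y | ∀ i, 0 ≤ y i} x) : ∀ i ∈ S, x i = 0 := by
  classical
  set z : EuclideanSpace ℝ ι := WithLp.toLp 2 fun i => if i ∈ S then x i else 0
  set s := ∑ i ∈ S, x i
  have hz : ∀ i, 0 ≤ z i := fun i => by by_cases hi : i ∈ S <;> simp [z, hi, hx i]
  have hzs : ∑ i, z i = s := by simp [z, s, sum_ite_mem]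
  have hρ0 : 0 ≤ ρ := (mul_nonneg (norm_nonneg _) (norm_nonneg _)).trans hρ.le
  have hs0 : 0 ≤ s := sum_nonneg fun i _ => hx i
  have hzS : ∑ i ∈ S, z i = s := sum_congr rfl fun i hi => by simp [z, hi]
  have hfirst := add_inner_nonpos_of_isMinOn_lassoCost hz
    (fun i => by by_cases hi : i ∈ S <;> simp [z, hi, hx i]) hmin
  rw [hzS] at hfirst
  have hρs : ρ * s ≤ ‖L‖ * ‖d‖ * s := calc
    ρ * s ≤ -inner ℝ (L x - d) (L z) := by linarith
    _ ≤ ‖L x - d‖ * ‖L z‖ := (neg_le_abs _).trans (abs_real_inner_le_norm _ _)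
    _ ≤ ‖d‖ * (‖L‖ * ‖z‖) := mul_le_mul (norm_sub_le_of_isMinOn_lassoCost hρ0 hx hmin)
        (L.le_opNorm z) (norm_nonneg _) (norm_nonneg _)
    _ ≤ ‖d‖ * (‖L‖ * s) := by gcongr; exact hzs ▸ EuclideanSpace.norm_le_sum_of_nonneg hz
    _ = ‖L‖ * ‖d‖ * s := by ring
  have hs : s = 0 := le_antisymm (by nlinarith) hs0
  exact (sum_eq_zero_iff_of_nonneg fun i _ => hx i).mp hs

end Lasso

theorem l2norm_eq_norm {m : Type*} [Fintype m] (v : m → ℝ) : l2norm v = ‖WithLp.toLp 2 v‖ := by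
  simp [l2norm, EuclideanSpace.norm_eq]

section Grho

variable {M N : ℕ} {A : Matrix (Fin M) (Fin N) ℝ} {d : Fin M → ℝ} {ρ : ℝ} {k : ℕ}

noncomputable def Grho (A : Matrix (Fin M) (Fin N) ℝ) (d : Fin M → ℝ) (ρ : ℝ)
    (x u : Fin N → ℝ) : ℝ :=
  ((1 : ℝ) / 2) * (∑ i, ((A.mulVec x - d) i) ^ 2) + ρ * ((∑ i, |x i|) - ∑ i, x i * u i)

abbrev UFeasible (k : ℕ) (u : Fin N → ℝ) : Prop :=
  (∑ i, |u i|) ≤ (k : ℝ) ∧ ∀ i, -1 ≤ u i ∧ u i ≤ 1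

theorem uFeasible_indicator {T : Finset (Fin N)} (hT : #T ≤ k) :
    UFeasible k fun i => if i ∈ T then 1 else 0 :=
  ⟨by simpa [apply_ite abs] using hT, fun i => by by_cases hi : i ∈ T <;> simp [hi]⟩

theorem exists_card_le_sum_mul_le_sum {x u : Fin N → ℝ} (hx : ∀ i, 0 ≤ x i)
    (hu : UFeasible k u) : ∃ T : Finset (Fin N), #T ≤ k ∧ ∑ i, x i * u i ≤ ∑ i ∈ T, x i := by
  obtain ⟨T, hT, hTk⟩ := exists_isTopSet_card_eq x (j := min k N) (by simp)
  have huT : ∑ i, |u i| ≤ #T := by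
    rw [hTk, Nat.cast_min]
    exact le_min hu.1 (by simpa using sum_le_sum fun i (_ : i ∈ univ) => abs_le.mpr (hu.2 i))
  exact ⟨T, hTk ▸ min_le_left k N,
    sum_mul_le_sum_of_isTopSet hT hx (fun i => abs_le.mpr (hu.2 i)) huT⟩

theorem GrhoC_of_feasible {x u : Fin N → ℝ} (hu : UFeasible k u) (hx : ∀ i, 0 ≤ x i) :
    GrhoC A d ρ k x u = Grho A d ρ x u := by
  rw [GrhoC, if_pos hu, if_pos hx, add_zero, add_zero, Grho]

theorem feasible_of_GrhoC_ne_top {x u : Fin N → ℝ} (h : GrhoC A d ρ k x u ≠ ⊤) :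
    UFeasible k u ∧ ∀ i, 0 ≤ x i := by
  by_contra hnot
  apply h
  by_cases hu : UFeasible k u
  · rw [GrhoC, if_pos hu, if_neg (fun hx => hnot ⟨hu, hx⟩)]
    exact EReal.add_top_of_ne_bot (EReal.coe_ne_bot _)
  · rw [GrhoC, if_neg hu, EReal.coe_add_top]
    exact EReal.top_add_of_ne_bot (by split_ifs <;> simp)

theorem feasible_and_Grho_le_of_forall_GrhoC_le {xρ uρ : Fin N → ℝ}
    (hmin : ∀ x u : Fin N → ℝ, GrhoC A d ρ k xρ uρ ≤ GrhoC A d ρ k x u) :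
    UFeasible k uρ ∧ (∀ i, 0 ≤ xρ i) ∧
      ∀ x u, UFeasible k u → (∀ i, 0 ≤ x i) → Grho A d ρ xρ uρ ≤ Grho A d ρ x u := by
  have h00 : GrhoC A d ρ k 0 0 = Grho A d ρ 0 0 :=
    GrhoC_of_feasible ⟨by simp, fun i => by norm_num⟩ fun i => le_rfl
  obtain ⟨hu, hx⟩ :=
    feasible_of_GrhoC_ne_top ((hmin 0 0).trans_lt (h00 ▸ EReal.coe_lt_top _)).ne
  refine ⟨hu, hx, fun x u hu' hx' => ?_⟩
  have h := hmin x u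
  rwa [GrhoC_of_feasible hu hx, GrhoC_of_feasible hu' hx', EReal.coe_le_coe_iff] at h

theorem Grho_indicator_eq_lassoCost (T : Finset (Fin N)) {x : Fin N → ℝ} (hx : ∀ i, 0 ≤ x i) :
    Grho A d ρ x (fun i => if i ∈ T then 1 else 0) =
      lassoCost (LinearMap.toContinuousLinearMap (Matrix.toEuclideanLin A)) (WithLp.toLp 2 d)
        ρ Tᶜ (WithLp.toLp 2 x) := by
  have hres : ∑ i, ((A.mulVec x - d) i) ^ 2 =
      ‖LinearMap.toContinuousLinearMap (Matrix.toEuclideanLin A) (WithLp.toLp 2 x) -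
        WithLp.toLp 2 d‖ ^ 2 := by
    simp [EuclideanSpace.real_norm_sq_eq, Matrix.toLpLin_toLp]
  have hpen : (∑ i, |x i|) - ∑ i, x i * (if i ∈ T then 1 else 0) = ∑ i ∈ Tᶜ, x i := by
    simp only [abs_of_nonneg (hx _), mul_ite, mul_one, mul_zero, sum_ite_mem, univ_inter]
    rw [← sum_add_sum_compl T x]
    ring
  rw [Grho, lassoCost, hres, hpen]

theorem isMinOn_lassoCost_of_Grho_le {xρ uρ : Fin N → ℝ} {T : Finset (Fin N)} (hT : #T ≤ k)
    (hxρ : ∀ i, 0 ≤ xρ i)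
    (hmin : ∀ x u, UFeasible k u → (∀ i, 0 ≤ x i) → Grho A d ρ xρ uρ ≤ Grho A d ρ x u)
    (hle : Grho A d ρ xρ (fun i => if i ∈ T then 1 else 0) ≤ Grho A d ρ xρ uρ) :
    IsMinOn (lassoCost (LinearMap.toContinuousLinearMap (Matrix.toEuclideanLin A))
      (WithLp.toLp 2 d) ρ Tᶜ) {y | ∀ i, 0 ≤ y i} (WithLp.toLp 2 xρ) := by
  intro y hy
  rw [Set.mem_ofPred_eq] at hy
  rw [Set.mem_ofPred_eq, ← Grho_indicator_eq_lassoCost T hxρ, ← WithLp.toLp_ofLp 2 y,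
    ← Grho_indicator_eq_lassoCost T hy]
  exact hle.trans (hmin _ _ (uFeasible_indicator hT) hy)

end Grho

theorem constrained_equality_at_min_general (M N : ℕ) (A : Matrix (Fin M) (Fin N) ℝ)
    (d : Fin M → ℝ) (ρ : ℝ) (k : ℕ)
    (hρ : specNorm A * l2norm d < ρ)
    (xρ uρ : Fin N → ℝ)
    (hmin : ∀ x u : Fin N → ℝ, GrhoC A d ρ k xρ uρ ≤ GrhoC A d ρ k x u) :
    (∑ i, |xρ i|) = ∑ i, xρ i * uρ i := by
  classical
  obtain ⟨huρ, hxρ, hminR⟩ := feasible_and_Grho_le_of_forall_GrhoC_le hmin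
  obtain ⟨T, hTk, hle⟩ := exists_card_le_sum_mul_le_sum hxρ huρ
  have hinner : ∑ i, xρ i * (if i ∈ T then 1 else 0) = ∑ i ∈ T, xρ i := by simp [sum_ite_mem]
  have hρ0 : 0 < ρ := (mul_nonneg (norm_nonneg _) (Real.sqrt_nonneg _)).trans_lt hρ
  have hge : ∑ i ∈ T, xρ i ≤ ∑ i, xρ i * uρ i := by
    have h := hminR xρ _ (uFeasible_indicator hTk) hxρ
    simp only [Grho, hinner] at h
    nlinarith
  have hGrho : Grho A d ρ xρ (fun i => if i ∈ T then 1 else 0) ≤ Grho A d ρ xρ uρ := by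
    simp only [Grho, hinner]
    nlinarith
  have hoff : ∀ i ∈ Tᶜ, xρ i = 0 := eq_zero_of_isMinOn_lassoCost (l2norm_eq_norm d ▸ hρ) hxρ
    (isMinOn_lassoCost_of_Grho_le hTk hxρ hminR hGrho)
  calc ∑ i, |xρ i| = ∑ i ∈ T, xρ i + ∑ i ∈ Tᶜ, xρ i := by
        rw [sum_add_sum_compl]; exact sum_congr rfl fun i _ => abs_of_nonneg (hxρ i)
    _ = ∑ i, xρ i * uρ i := by rw [sum_eq_zero hoff, add_zero]; exact le_antisymm hge hle

theorem constrained_equality_at_min (M N : ℕ) (A : Matrix (Fin M) (Fin N) ℝ)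
    (d : Fin M → ℝ) (ρ : ℝ) (k : ℕ) (hk : 0 < k)
    (hρ : specNorm A * l2norm d < ρ)
    (xρ uρ : Fin N → ℝ)
    (hmin : ∀ x u : Fin N → ℝ, GrhoC A d ρ k xρ uρ ≤ GrhoC A d ρ k x u) :
    (∑ i, |xρ i|) = ∑ i, xρ i * uρ i :=
  constrained_equality_at_min_general M N A d ρ k hρ xρ uρ hmin
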